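/- In the Metropolis-within-Gibbs setting, define ϱ := inf over f ∈ L²(X,π_X) with ∫_Θ var_{ξ(θ,·)}(f) π_Θ(dθ) > 0 of the ratio [∫_Θ var_{ξ(θ,·)}(f) Gap(Π_θ) π_Θ(dθ)] / [∫_Θ var_{ξ(θ,·)}(f) π_Θ(dθ)]. Then for every f ∈ L²(X,π_X): 0 ≤ (var(f,Γ_x) − var_{π_X}(f))/2 ≤ var(f,Φ_x), and if ϱ > 0 then var(f,Φ_x) ≤ (ϱ^{−1} − 1) var_{π_X}(f) + ϱ^{−1} var(f,Γ_x). -/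

import Mathlib

/-!
Both asymptotic variances are `2 sup_g [2⟨f - π_X f, g⟩ - E(g)] - var(f)`, so it suffices to compare
Dirichlet forms: if `c E_K ≤ E_L`, replacing `g` by `c g` shows `sup_L ≤ c⁻¹ sup_K`.
Disintegrating the one-step joint law of `Φ_x` through `π = π_Θ ⊗ ξ` gives
`E_{Φ_x}(g) = ∫ E_{Π_θ}(g) dπ_Θ`, and `Γ_x` is the case `Π_θ = ξ(θ, ·)`, where
`E_{Π_θ}(g) = var_{ξ(θ,·)}(g)`. Reversibility makes `ξ(θ, ·)` invariant for `Π_θ`, whence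
`Gap(Π_θ) var ≤ E_{Π_θ} ≤ 2 var`, i.e. `ϱ E_Γ ≤ E_Φ ≤ 2 E_Γ`. Finally `E_Γ(g) ≤ ‖g‖²` gives
`var(f, Γ_x) ≥ var_{π_X}(f)`.
-/

open MeasureTheory ProbabilityTheory
open scoped ENNReal

/-- The Dirichlet form `E_K(f) = ∫ f (f - Kf) dμ` of a Markov transition `K`. -/
noncomputable def dform {α : Type*} [MeasurableSpace α]
    (μ : Measure α) (K : α → Measure α) (f : α → ℝ) : ℝ :=
  ∫ x, f x * (f x - ∫ y, f y ∂(K x)) ∂μ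

/-- The variance of `f` under `μ`: `var_μ(f) = μ(f²) - μ(f)²`. -/
noncomputable def varF {α : Type*} [MeasurableSpace α] (μ : Measure α) (f : α → ℝ) : ℝ :=
  (∫ x, f x ^ 2 ∂μ) - (∫ x, f x ∂μ) ^ 2

/-- The right spectral gap `Gap(K) = inf {E_K(f)/var_μ(f) : f ∈ L²(μ), var_μ(f) > 0}`. -/
noncomputable def gapR {α : Type*} [MeasurableSpace α]
    (μ : Measure α) (K : α → Measure α) : ℝ :=
  sInf {r : ℝ | ∃ f : α → ℝ, MemLp f 2 μ ∧ 0 < varF μ f ∧ r = dform μ K f / varF μ f}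

/-- The asymptotic variance of `f` for a `μ`-reversible kernel `K`, via the variational
representation `var(f, K) = 2 sup_{g ∈ L²₀(μ)} [2⟨f - μ(f), g⟩_μ - E_K(g)] - var_μ(f)`,
valued in the extended reals. -/
noncomputable def avarE {α : Type*} [MeasurableSpace α]
    (μ : Measure α) (K : α → Measure α) (f : α → ℝ) : EReal :=
  2 * sSup {r : EReal | ∃ g : α → ℝ, MemLp g 2 μ ∧ (∫ x, g x ∂μ) = 0 ∧
      r = ((2 * (∫ x, (f x - ∫ t, f t ∂μ) * g x ∂μ) - dform μ K g : ℝ) : EReal)}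
    - ((varF μ f : ℝ) : EReal)

variable {Θ X : Type*} [MeasurableSpace Θ] [MeasurableSpace X]

/-- The `X`-marginal Metropolis-within-Gibbs kernel
`Φ_x(x₀, S) = ∫_Θ Π_θ(x₀, S) η(x₀, dθ)`. -/
noncomputable def PhiX (η : Kernel X Θ) (Pk : Kernel (Θ × X) X) (x₀ : X) : Measure X :=
  (η x₀).bind (fun θ => Pk (θ, x₀))

/-- The `X`-marginal Gibbs kernel `Γ_x(x₀, S) = ∫_Θ ξ(θ, S) η(x₀, dθ)`. -/
noncomputable def GammaX (η : Kernel X Θ) (ξ : Kernel Θ X) (x₀ : X) : Measure X :=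
  (η x₀).bind (fun θ => ξ θ)

/-- The constant `ϱ`, an infimum over `f ∈ L²(X, π_X)` of the ratio
`∫ var_{ξ(θ,·)}(f) Gap(Π_θ) π_Θ(dθ) / ∫ var_{ξ(θ,·)}(f) π_Θ(dθ)`. -/
noncomputable def mwgRho (π : Measure (Θ × X)) (ξ : Kernel Θ X)
    (Pk : Kernel (Θ × X) X) : ℝ :=
  sInf {r : ℝ | ∃ f : X → ℝ, MemLp f 2 π.snd ∧
    0 < (∫ θ, varF (ξ θ) f ∂π.fst) ∧
    r = (∫ θ, varF (ξ θ) f * gapR (ξ θ) (fun x => Pk (θ, x)) ∂π.fst) /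
        (∫ θ, varF (ξ θ) f ∂π.fst)}


section DirichletForm

variable {α β : Type*} [MeasurableSpace α] [MeasurableSpace β]

lemma measurePreserving_fst_compProd {μ : Measure α} [SFinite μ] {κ : Kernel α β}
    [IsMarkovKernel κ] : MeasurePreserving Prod.fst (μ ⊗ₘ κ) μ :=
  ⟨measurable_fst, Measure.fst_compProd μ κ⟩

lemma measurePreserving_snd_compProd {μ : Measure α} [SFinite μ] {κ : Kernel α β}
    [IsSFiniteKernel κ] : MeasurePreserving Prod.snd (μ ⊗ₘ κ) (κ ∘ₘ μ) :=
  ⟨measurable_snd, Measure.snd_compProd μ κ⟩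

lemma memLp_fst_compProd {ν : Measure α} [SFinite ν] {κ : Kernel α β} [IsMarkovKernel κ]
    {a : α → ℝ} (ha : MemLp a 2 ν) : MemLp (fun p => a p.1) 2 (ν ⊗ₘ κ) :=
  ha.comp_measurePreserving measurePreserving_fst_compProd

lemma memLp_snd_compProd {ν : Measure α} [SFinite ν] {κ : Kernel α β} [IsSFiniteKernel κ]
    {b : β → ℝ} (hb : MemLp b 2 (κ ∘ₘ ν)) : MemLp (fun p => b p.2) 2 (ν ⊗ₘ κ) :=
  hb.comp_measurePreserving measurePreserving_snd_compProd

lemma integral_fst_compProd {ν : Measure α} [SFinite ν] {κ : Kernel α β} [IsMarkovKernel κ]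
    {a : α → ℝ} (ha : AEStronglyMeasurable a ν) : ∫ p, a p.1 ∂(ν ⊗ₘ κ) = ∫ x, a x ∂ν := by
  rw [← Measure.fst_compProd ν κ] at ha
  conv_rhs => rw [← Measure.fst_compProd ν κ]
  exact (integral_map measurable_fst.aemeasurable ha).symm

lemma integral_snd_compProd {ν : Measure α} [SFinite ν] {κ : Kernel α β} [IsSFiniteKernel κ]
    {b : β → ℝ} (hb : AEStronglyMeasurable b (κ ∘ₘ ν)) :
    ∫ p, b p.2 ∂(ν ⊗ₘ κ) = ∫ y, b y ∂(κ ∘ₘ ν) := by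
  rw [← Measure.snd_compProd ν κ] at hb ⊢
  exact (integral_map measurable_snd.aemeasurable hb).symm

lemma integrable_mul_sub_compProd {ν : Measure α} [SFinite ν] {κ : Kernel α β} [IsMarkovKernel κ]
    {a : α → ℝ} {b : β → ℝ} (ha : MemLp a 2 ν) (hb : MemLp b 2 (κ ∘ₘ ν)) :
    Integrable (fun p => a p.1 * (a p.1 - b p.2)) (ν ⊗ₘ κ) := by
  have h₁ := memLp_fst_compProd (κ := κ) ha
  have h₂ := memLp_snd_compProd hb
  exact ((h₁.integrable_mul h₁).sub (h₁.integrable_mul h₂)).congr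
    (.of_forall fun p => by simp [mul_sub])

lemma integral_compProd_mul_sub {ν : Measure α} [IsFiniteMeasure ν] {κ : Kernel α β}
    [IsMarkovKernel κ] {a : α → ℝ} {b : β → ℝ} (ha : MemLp a 2 ν) (hb : MemLp b 2 (κ ∘ₘ ν)) :
    Integrable (fun x => a x * (a x - ∫ y, b y ∂κ x)) ν ∧
      ∫ p, a p.1 * (a p.1 - b p.2) ∂(ν ⊗ₘ κ) = ∫ x, a x * (a x - ∫ y, b y ∂κ x) ∂ν := by
  have hF := integrable_mul_sub_compProd ha hb
  have hbx : ∀ᵐ x ∂ν, Integrable b (κ x) := by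
    simpa using ((memLp_snd_compProd hb).integrable one_le_two).ae_of_compProd
  have hinner : ∀ᵐ x ∂ν, ∫ y, a x * (a x - b y) ∂κ x = a x * (a x - ∫ y, b y ∂κ x) := by
    filter_upwards [hbx] with x hb
    rw [integral_const_mul, integral_sub (integrable_const _) hb]
    simp
  have hFx : Integrable (fun x => ∫ y, a x * (a x - b y) ∂κ x) ν := by
    simpa using hF.integral_compProd
  refine ⟨hFx.congr hinner, ?_⟩
  rw [Measure.integral_compProd hF]
  exact integral_congr_ae hinner

lemma dform_const_mul (μ : Measure α) (K : α → Measure α) (g : α → ℝ) (c : ℝ) :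
    dform μ K (fun x => c * g x) = c ^ 2 * dform μ K g := by
  simp only [dform]
  rw [← integral_const_mul]
  congr 1 with x
  rw [integral_const_mul]
  ring

section Invariant

variable {μ : Measure α} [IsProbabilityMeasure μ] {κ : Kernel α α} [IsMarkovKernel κ] {g : α → ℝ}

lemma varF_eq_integral_sub_sq (hg : MemLp g 2 μ) :
    varF μ g = ∫ x, (g x - ∫ t, g t ∂μ) ^ 2 ∂μ := by
  rw [← variance_eq_integral hg.1.aemeasurable, variance_eq_sub hg]
  rfl

lemma varF_nonneg (hg : MemLp g 2 μ) : 0 ≤ varF μ g := by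
  rw [varF_eq_integral_sub_sq hg]
  exact integral_nonneg fun _ => sq_nonneg _

lemma dform_const_eq_varF (hg : MemLp g 2 μ) : dform μ (fun _ => μ) g = varF μ g := by
  have hsq : Integrable (fun x => g x * g x) μ := by simpa only [sq] using hg.integrable_sq
  simp only [dform, varF, mul_sub]
  rw [integral_sub hsq ((hg.integrable one_le_two).mul_const _), integral_mul_const]
  simp only [sq]

lemma dform_eq_integral_compProd (hκ : κ ∘ₘ μ = μ) (hg : MemLp g 2 μ) :
    dform μ κ g = ∫ p, g p.1 * (g p.1 - g p.2) ∂(μ ⊗ₘ κ) :=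
  (integral_compProd_mul_sub hg (by rwa [hκ])).2.symm

lemma dform_eq_half_integral_sq (hκ : κ ∘ₘ μ = μ) (hg : MemLp g 2 μ) :
    dform μ κ g = (∫ p, (g p.1 - g p.2) ^ 2 ∂(μ ⊗ₘ κ)) / 2 := by
  have hgκ : MemLp g 2 (κ ∘ₘ μ) := by rwa [hκ]
  have h₁ := (memLp_fst_compProd (κ := κ) hg).integrable_sq
  have h₂ := (memLp_snd_compProd hgκ).integrable_sq
  have hsq : ∫ p, g p.1 ^ 2 ∂(μ ⊗ₘ κ) = ∫ p, g p.2 ^ 2 ∂(μ ⊗ₘ κ) := by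
    have hm : AEStronglyMeasurable (fun x => g x ^ 2) μ := hg.integrable_sq.1
    have hmκ : AEStronglyMeasurable (fun x => g x ^ 2) (κ ∘ₘ μ) := hgκ.integrable_sq.1
    rw [integral_fst_compProd (κ := κ) hm, integral_snd_compProd hmκ, hκ]
  have hexp : ∫ p, (g p.1 - g p.2) ^ 2 ∂(μ ⊗ₘ κ)
      = 2 * ∫ p, g p.1 * (g p.1 - g p.2) ∂(μ ⊗ₘ κ)
        - (∫ p, g p.1 ^ 2 ∂(μ ⊗ₘ κ) - ∫ p, g p.2 ^ 2 ∂(μ ⊗ₘ κ)) := by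
    have hd : Integrable (fun p : α × α => g p.1 ^ 2 - g p.2 ^ 2) (μ ⊗ₘ κ) := h₁.sub h₂
    rw [← integral_sub h₁ h₂, ← integral_const_mul,
      ← integral_sub ((integrable_mul_sub_compProd hg hgκ).const_mul 2) hd]
    congr 1 with p
    ring
  rw [dform_eq_integral_compProd hκ hg, hexp, hsq]
  ring

lemma dform_nonneg (hκ : κ ∘ₘ μ = μ) (hg : MemLp g 2 μ) : 0 ≤ dform μ κ g := by
  rw [dform_eq_half_integral_sq hκ hg]
  exact div_nonneg (integral_nonneg fun _ => sq_nonneg _) zero_le_two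

lemma dform_le_two_mul_varF (hκ : κ ∘ₘ μ = μ) (hg : MemLp g 2 μ) :
    dform μ κ g ≤ 2 * varF μ g := by
  set c := ∫ t, g t ∂μ
  have hgκ : MemLp g 2 (κ ∘ₘ μ) := by rwa [hκ]
  have hc : MemLp (fun x => g x - c) 2 μ := hg.sub (memLp_const c)
  have hcκ : MemLp (fun x => g x - c) 2 (κ ∘ₘ μ) := by rwa [hκ]
  have h₁ := (memLp_fst_compProd (κ := κ) hc).integrable_sq
  have h₂ := (memLp_snd_compProd hcκ).integrable_sq
  have hle : ∫ p, (g p.1 - g p.2) ^ 2 ∂(μ ⊗ₘ κ)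
      ≤ ∫ p, (2 * (g p.1 - c) ^ 2 + 2 * (g p.2 - c) ^ 2) ∂(μ ⊗ₘ κ) :=
    integral_mono ((memLp_fst_compProd hg).sub (memLp_snd_compProd hgκ)).integrable_sq
      ((h₁.const_mul 2).add (h₂.const_mul 2))
      fun p => by nlinarith [sq_nonneg (g p.1 + g p.2 - 2 * c)]
  have hm : AEStronglyMeasurable (fun x => (g x - c) ^ 2) μ := hc.integrable_sq.1
  have hmκ : AEStronglyMeasurable (fun x => (g x - c) ^ 2) (κ ∘ₘ μ) := hcκ.integrable_sq.1
  rw [integral_add (h₁.const_mul 2) (h₂.const_mul 2), integral_const_mul, integral_const_mul,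
    integral_fst_compProd (κ := κ) hm, integral_snd_compProd hmκ, hκ] at hle
  rw [dform_eq_half_integral_sq hκ hg, varF_eq_integral_sub_sq hg]
  linarith

lemma dform_div_varF_nonneg (hκ : κ ∘ₘ μ = μ) :
    ∀ r ∈ {r : ℝ | ∃ f : α → ℝ, MemLp f 2 μ ∧ 0 < varF μ f ∧ r = dform μ κ f / varF μ f},
      0 ≤ r := by
  rintro _ ⟨f, hf, hvar, rfl⟩
  exact div_nonneg (dform_nonneg hκ hf) hvar.le

lemma gapR_nonneg (hκ : κ ∘ₘ μ = μ) : 0 ≤ gapR μ κ :=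
  Real.sInf_nonneg (dform_div_varF_nonneg hκ)

lemma gapR_mul_varF_le_dform (hκ : κ ∘ₘ μ = μ) (hg : MemLp g 2 μ) :
    gapR μ κ * varF μ g ≤ dform μ κ g := by
  rcases (varF_nonneg hg).eq_or_lt with hvar | hvar
  · rw [← hvar, mul_zero]
    exact dform_nonneg hκ hg
  · rw [← le_div_iff₀ hvar]
    exact csInf_le ⟨0, dform_div_varF_nonneg hκ⟩ ⟨g, hg, hvar, rfl⟩

end Invariant

end DirichletForm

section AsymptoticVariance

variable {α : Type*} [MeasurableSpace α] {μ : Measure α} {K L : α → Measure α} {f : α → ℝ}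

noncomputable def avarSup (μ : Measure α) (K : α → Measure α) (f : α → ℝ) : EReal :=
  sSup {r : EReal | ∃ g : α → ℝ, MemLp g 2 μ ∧ (∫ x, g x ∂μ) = 0 ∧
      r = ((2 * (∫ x, (f x - ∫ t, f t ∂μ) * g x ∂μ) - dform μ K g : ℝ) : EReal)}

lemma avarE_eq_two_mul_avarSup_sub (μ : Measure α) (K : α → Measure α) (f : α → ℝ) :
    avarE μ K f = 2 * avarSup μ K f - (varF μ f : EReal) := rfl

lemma zero_le_avarSup : 0 ≤ avarSup μ K f := by
  have h : ((2 * (∫ x, (f x - ∫ t, f t ∂μ) * (0 : ℝ) ∂μ) - dform μ K (fun _ => 0) : ℝ) : EReal)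
      ≤ avarSup μ K f := le_sSup ⟨fun _ => 0, MemLp.zero', by simp, rfl⟩
  simpa [dform] using h

lemma varF_le_avarSup [IsProbabilityMeasure μ] (hf : MemLp f 2 μ)
    (hK : ∀ g, MemLp g 2 μ → dform μ K g ≤ ∫ x, g x ^ 2 ∂μ) :
    (varF μ f : EReal) ≤ avarSup μ K f := by
  set m := ∫ t, f t ∂μ
  have hmean : ∫ x, (f x - m) ∂μ = 0 := by
    rw [integral_sub (hf.integrable one_le_two) (integrable_const m)]
    simp [m]
  have h : ((2 * (∫ x, (f x - m) * (f x - m) ∂μ) - dform μ K (fun x => f x - m) : ℝ) : EReal)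
      ≤ avarSup μ K f := le_sSup ⟨fun x => f x - m, hf.sub (memLp_const m), hmean, rfl⟩
  have hsq : ∫ x, (f x - m) * (f x - m) ∂μ = ∫ x, (f x - m) ^ 2 ∂μ := by simp only [sq]
  have hvar : ∫ x, (f x - m) ^ 2 ∂μ = varF μ f := (varF_eq_integral_sub_sq hf).symm
  have hE : dform μ K (fun x => f x - m) ≤ ∫ x, (f x - m) ^ 2 ∂μ :=
    hK _ (hf.sub (memLp_const m))
  refine le_trans ?_ h
  rw [EReal.coe_le_coe_iff]
  linarith

lemma avarSup_le_of_dform_le {c : ℝ} (hc : 0 < c)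
    (h : ∀ g, MemLp g 2 μ → c * dform μ K g ≤ dform μ L g) :
    avarSup μ L f ≤ ((c⁻¹ : ℝ) : EReal) * avarSup μ K f := by
  refine sSup_le ?_
  rintro _ ⟨g, hg, hmean, rfl⟩
  set m := ∫ t, f t ∂μ
  have hK : ((2 * (∫ x, (f x - m) * (c * g x) ∂μ) - dform μ K (fun x => c * g x) : ℝ) : EReal)
      ≤ avarSup μ K f :=
    le_sSup ⟨fun x => c * g x, hg.const_mul c, by rw [integral_const_mul, hmean, mul_zero], rfl⟩
  have hip : ∫ x, (f x - m) * (c * g x) ∂μ = c * ∫ x, (f x - m) * g x ∂μ := by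
    rw [← integral_const_mul]
    congr 1 with x
    ring
  rw [hip, dform_const_mul] at hK
  calc ((2 * (∫ x, (f x - m) * g x ∂μ) - dform μ L g : ℝ) : EReal)
      ≤ ((c⁻¹ * (2 * (c * ∫ x, (f x - m) * g x ∂μ) - c ^ 2 * dform μ K g) : ℝ) : EReal) := by
        rw [EReal.coe_le_coe_iff]
        have := h g hg
        field_simp
        linarith
    _ = ((c⁻¹ : ℝ) : EReal) *
          ((2 * (c * ∫ x, (f x - m) * g x ∂μ) - c ^ 2 * dform μ K g : ℝ) : EReal) :=
        EReal.coe_mul _ _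
    _ ≤ ((c⁻¹ : ℝ) : EReal) * avarSup μ K f :=
        mul_le_mul_of_nonneg_left hK (EReal.coe_nonneg.2 (inv_pos.2 hc).le)

lemma zero_le_avarE_sub_varF_div_two (h : (varF μ f : EReal) ≤ avarSup μ K f) :
    0 ≤ (avarE μ K f - varF μ f) / 2 := by
  rw [avarE_eq_two_mul_avarSup_sub]
  generalize avarSup μ K f = S at h
  induction S using EReal.rec with
  | bot => simp at h
  | coe s =>
    rw [EReal.coe_le_coe_iff] at h
    rw [show (2 * (s : EReal) - varF μ f - varF μ f) / 2
        = (((2 * s - varF μ f - varF μ f) / 2 : ℝ) : EReal) by norm_cast, EReal.coe_nonneg]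
    linarith
  | top =>
    rw [EReal.mul_top_of_pos two_pos, EReal.top_sub_coe, EReal.top_sub_coe,
      EReal.top_div_of_pos_ne_top two_pos (by decide)]
    exact le_top

lemma avarE_sub_varF_div_two_le (hv : (varF μ f : EReal) ≤ avarSup μ K f)
    (h : avarSup μ K f ≤ 2 * avarSup μ L f) :
    (avarE μ K f - varF μ f) / 2 ≤ avarE μ L f := by
  rw [avarE_eq_two_mul_avarSup_sub, avarE_eq_two_mul_avarSup_sub]
  generalize avarSup μ K f = S at hv h
  generalize avarSup μ L f = T at h
  induction T using EReal.rec with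
  | bot =>
    rw [EReal.mul_bot_of_pos two_pos, le_bot_iff] at h
    simp [h] at hv
  | coe t =>
    rw [show (2 : EReal) * t = ((2 * t : ℝ) : EReal) by norm_cast] at h
    induction S using EReal.rec with
    | bot => simp at hv
    | coe s =>
      rw [EReal.coe_le_coe_iff] at hv h
      rw [show (2 * (s : EReal) - varF μ f - varF μ f) / 2
          = (((2 * s - varF μ f - varF μ f) / 2 : ℝ) : EReal) by norm_cast,
        show 2 * (t : EReal) - varF μ f = ((2 * t - varF μ f : ℝ) : EReal) by norm_cast,
        EReal.coe_le_coe_iff]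
      linarith
    | top => exact absurd h (not_le.2 (EReal.coe_lt_top _))
  | top =>
    rw [EReal.mul_top_of_pos two_pos, EReal.top_sub_coe]
    exact le_top

lemma avarE_le_of_avarSup_le {ρ : ℝ} (hρ : 0 < ρ) (hK : 0 ≤ avarSup μ K f)
    (h : avarSup μ L f ≤ ((ρ⁻¹ : ℝ) : EReal) * avarSup μ K f) :
    avarE μ L f ≤ (((ρ⁻¹ - 1) * varF μ f : ℝ) : EReal) + ((ρ⁻¹ : ℝ) : EReal) * avarE μ K f := by
  rw [avarE_eq_two_mul_avarSup_sub, avarE_eq_two_mul_avarSup_sub]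
  generalize avarSup μ K f = S at hK h
  generalize avarSup μ L f = T at h
  induction S using EReal.rec with
  | bot => simp at hK
  | coe s =>
    rw [← EReal.coe_mul] at h
    induction T using EReal.rec with
    | bot =>
      rw [EReal.mul_bot_of_pos two_pos, EReal.bot_sub]
      exact bot_le
    | coe t =>
      rw [EReal.coe_le_coe_iff] at h
      rw [show 2 * (t : EReal) - varF μ f = ((2 * t - varF μ f : ℝ) : EReal) by norm_cast,
        show (((ρ⁻¹ - 1) * varF μ f : ℝ) : EReal)
            + ((ρ⁻¹ : ℝ) : EReal) * (2 * (s : EReal) - varF μ f)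
          = (((ρ⁻¹ - 1) * varF μ f + ρ⁻¹ * (2 * s - varF μ f) : ℝ) : EReal) by norm_cast,
        EReal.coe_le_coe_iff]
      nlinarith
    | top => exact absurd h (not_le.2 (EReal.coe_lt_top _))
  | top =>
    rw [EReal.mul_top_of_pos two_pos, EReal.top_sub_coe, EReal.coe_mul_top_of_pos (inv_pos.2 hρ),
      EReal.coe_add_top]
    exact le_top

end AsymptoticVariance

section KernelComposition

variable {α β : Type*} [MeasurableSpace α] [MeasurableSpace β]

lemma comp_eq_of_reversible {μ : Measure α} {κ : Kernel α α} [IsMarkovKernel κ]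
    (hrev : ∀ A B : Set α, MeasurableSet A → MeasurableSet B →
      ∫⁻ x in A, κ x B ∂μ = ∫⁻ x in B, κ x A ∂μ) :
    κ ∘ₘ μ = μ := by
  ext s hs
  rw [Measure.bind_apply hs κ.aemeasurable, ← setLIntegral_univ,
    hrev _ _ MeasurableSet.univ hs]
  simp

lemma comp_compProd_eq_comp {μ : Measure α} [SFinite μ] {ξ : Kernel α β} [IsSFiniteKernel ξ]
    {P : Kernel (α × β) β} [IsSFiniteKernel P] (hP : ∀ a, P.sectR a ∘ₘ ξ a = ξ a) :
    P ∘ₘ (μ ⊗ₘ ξ) = ξ ∘ₘ μ := by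
  ext s hs
  rw [Measure.bind_apply hs P.aemeasurable, Measure.lintegral_compProd (P.measurable_coe hs),
    Measure.bind_apply hs ξ.aemeasurable]
  refine lintegral_congr fun a => ?_
  conv_rhs => rw [← hP a, Measure.bind_apply hs (P.sectR a).aemeasurable]
  rfl

lemma ae_memLp_of_memLp_comp {μ : Measure α} {κ : Kernel α β} {g : β → ℝ}
    (hg : MemLp g 2 (κ ∘ₘ μ)) : ∀ᵐ a ∂μ, MemLp g 2 (κ a) := by
  have hmeas : ∀ᵐ a ∂μ, AEStronglyMeasurable g (κ a) := by
    filter_upwards [Measure.ae_ae_of_ae_comp hg.1.ae_eq_mk] with a ha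
    exact hg.1.stronglyMeasurable_mk.aestronglyMeasurable.congr (Filter.EventuallyEq.symm ha)
  filter_upwards [hmeas, Measure.ae_integrable_of_integrable_comp hg.integrable_sq] with a h₁ h₂
  exact (memLp_two_iff_integrable_sq h₁).2 h₂

end KernelComposition

noncomputable def phiKernel (η : Kernel X Θ) (Pk : Kernel (Θ × X) X) : Kernel X X :=
  Pk ∘ₖ (η ×ₖ Kernel.id)

instance {η : Kernel X Θ} [IsMarkovKernel η] {Pk : Kernel (Θ × X) X} [IsMarkovKernel Pk] :
    IsMarkovKernel (phiKernel η Pk) := by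
  unfold phiKernel
  infer_instance

lemma coe_phiKernel {η : Kernel X Θ} [IsSFiniteKernel η] {Pk : Kernel (Θ × X) X} :
    ⇑(phiKernel η Pk) = PhiX η Pk := by
  ext x s hs
  rw [phiKernel, Kernel.comp_apply, Kernel.prod_apply, Kernel.id_apply, Measure.prod_dirac, PhiX,
    Measure.bind_apply hs Pk.aemeasurable, Measure.bind_apply hs (by fun_prop),
    lintegral_map (Pk.measurable_coe hs) measurable_prodMk_right]

section MetropolisWithinGibbs

variable {π : Measure (Θ × X)} [IsProbabilityMeasure π] {ξ : Kernel Θ X} [IsMarkovKernel ξ]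
  {η : Kernel X Θ} [IsMarkovKernel η] {Pk : Kernel (Θ × X) X} [IsMarkovKernel Pk] {g : X → ℝ}

lemma snd_eq_comp_fst (hdis₁ : π = π.fst ⊗ₘ ξ) : π.snd = ξ ∘ₘ π.fst := by
  conv_lhs => rw [hdis₁]
  exact Measure.snd_compProd _ _

lemma ae_memLp_of_memLp_snd (hdis₁ : π = π.fst ⊗ₘ ξ) (hg : MemLp g 2 π.snd) :
    ∀ᵐ θ ∂π.fst, MemLp g 2 (ξ θ) :=
  ae_memLp_of_memLp_comp (snd_eq_comp_fst hdis₁ ▸ hg)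

lemma comp_eq_snd_of_invariant (hdis₁ : π = π.fst ⊗ₘ ξ) (hPk : ∀ θ, Pk.sectR θ ∘ₘ ξ θ = ξ θ) :
    Pk ∘ₘ π = π.snd := by
  rw [snd_eq_comp_fst hdis₁, ← comp_compProd_eq_comp hPk, ← hdis₁]

lemma compProd_phiKernel (hdis₂ : π = (π.snd ⊗ₘ η).map Prod.swap) :
    π.snd ⊗ₘ phiKernel η Pk = (π ⊗ₘ Pk).map (fun q => (q.1.2, q.2)) := by
  have hproj : Measurable (fun q : (Θ × X) × X => (q.1.2, q.2)) := by fun_prop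
  ext s hs
  rw [Measure.map_apply hproj hs, Measure.compProd_apply hs, Measure.compProd_apply (hproj hs),
    coe_phiKernel]
  have hP := Kernel.measurable_kernel_prodMk_left (κ := Pk) (hproj hs)
  have hPswap : Measurable fun a : X × Θ =>
      Pk a.swap (Prod.mk a.swap ⁻¹' ((fun q : (Θ × X) × X => (q.1.2, q.2)) ⁻¹' s)) :=
    hP.comp measurable_swap
  conv_rhs => rw [hdis₂]
  rw [lintegral_map hP measurable_swap, Measure.lintegral_compProd hPswap]
  refine lintegral_congr fun x => ?_
  exact Measure.bind_apply (measurable_prodMk_left hs) (by fun_prop)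

lemma dform_PhiX_eq_integral (hdis₂ : π = (π.snd ⊗ₘ η).map Prod.swap)
    (hPk : Pk ∘ₘ π = π.snd) (hg : MemLp g 2 π.snd) :
    Integrable (fun p => g p.2 * (g p.2 - ∫ y, g y ∂Pk p)) π ∧
      dform π.snd (PhiX η Pk) g = ∫ p, g p.2 * (g p.2 - ∫ y, g y ∂Pk p) ∂π := by
  have hproj : Measurable (fun q : (Θ × X) × X => (q.1.2, q.2)) := by fun_prop
  have hmap := compProd_phiKernel (Pk := Pk) hdis₂
  have hinv : phiKernel η Pk ∘ₘ π.snd = π.snd := by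
    rw [← Measure.snd_compProd, hmap, Measure.snd, Measure.map_map measurable_snd hproj]
    exact (Measure.snd_compProd π Pk).trans hPk
  have hgπ : MemLp (fun p : Θ × X => g p.2) 2 π := hg.comp_measurePreserving ⟨measurable_snd, rfl⟩
  obtain ⟨hH, hFH⟩ := integral_compProd_mul_sub hgπ (hPk ▸ hg)
  refine ⟨hH, ?_⟩
  have hF := integrable_mul_sub_compProd hg (by rwa [hinv] : MemLp g 2 (phiKernel η Pk ∘ₘ π.snd))
  rw [hmap] at hF
  rw [← coe_phiKernel, dform_eq_integral_compProd hinv hg, hmap,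
    integral_map hproj.aemeasurable hF.1, hFH]

lemma dform_PhiX_eq_integral_dform (hdis₁ : π = π.fst ⊗ₘ ξ)
    (hdis₂ : π = (π.snd ⊗ₘ η).map Prod.swap) (hPk : Pk ∘ₘ π = π.snd) (hg : MemLp g 2 π.snd) :
    Integrable (fun θ => dform (ξ θ) (fun x => Pk (θ, x)) g) π.fst ∧
      dform π.snd (PhiX η Pk) g = ∫ θ, dform (ξ θ) (fun x => Pk (θ, x)) g ∂π.fst := by
  obtain ⟨hH, hΦ⟩ := dform_PhiX_eq_integral hdis₂ hPk hg
  rw [hdis₁] at hH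
  have hint := hH.integral_compProd
  simp only [Kernel.prodMkLeft_apply, Kernel.const_apply] at hint
  refine ⟨hint, ?_⟩
  rw [hΦ]
  conv_lhs => rw [hdis₁]
  exact Measure.integral_compProd hH

lemma prodMkRight_comp_eq_snd (hdis₁ : π = π.fst ⊗ₘ ξ) :
    Kernel.prodMkRight X ξ ∘ₘ π = π.snd :=
  comp_eq_snd_of_invariant hdis₁ fun θ => by
    change Kernel.const X (ξ θ) ∘ₘ ξ θ = ξ θ
    simp [Measure.const_comp]

lemma dform_GammaX_eq_integral_varF (hdis₁ : π = π.fst ⊗ₘ ξ)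
    (hdis₂ : π = (π.snd ⊗ₘ η).map Prod.swap) (hg : MemLp g 2 π.snd) :
    Integrable (fun θ => varF (ξ θ) g) π.fst ∧
      dform π.snd (GammaX η ξ) g = ∫ θ, varF (ξ θ) g ∂π.fst := by
  obtain ⟨hint, hΓ⟩ :=
    dform_PhiX_eq_integral_dform hdis₁ hdis₂ (prodMkRight_comp_eq_snd hdis₁) hg
  have hvar : (fun θ => dform (ξ θ) (fun x => Kernel.prodMkRight X ξ (θ, x)) g)
      =ᵐ[π.fst] fun θ => varF (ξ θ) g := by
    filter_upwards [ae_memLp_of_memLp_snd hdis₁ hg] with θ hθ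
    exact dform_const_eq_varF hθ
  exact ⟨hint.congr hvar, hΓ.trans (integral_congr_ae hvar)⟩

lemma dform_GammaX_le_integral_sq (hdis₁ : π = π.fst ⊗ₘ ξ)
    (hdis₂ : π = (π.snd ⊗ₘ η).map Prod.swap) (hg : MemLp g 2 π.snd) :
    dform π.snd (GammaX η ξ) g ≤ ∫ x, g x ^ 2 ∂π.snd := by
  have hsq : Integrable (fun p : Θ × X => g p.2 ^ 2) (π.fst ⊗ₘ ξ) := by
    rw [← hdis₁]
    exact (hg.comp_measurePreserving ⟨measurable_snd, rfl⟩).integrable_sq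
  have hsqθ := hsq.integral_compProd
  simp only [Kernel.prodMkLeft_apply, Kernel.const_apply] at hsqθ
  rw [(dform_GammaX_eq_integral_varF hdis₁ hdis₂ hg).2]
  calc ∫ θ, varF (ξ θ) g ∂π.fst ≤ ∫ θ, ∫ x, g x ^ 2 ∂ξ θ ∂π.fst := by
        refine integral_mono_of_nonneg ?_ hsqθ (.of_forall fun θ => ?_)
        · filter_upwards [ae_memLp_of_memLp_snd hdis₁ hg] with θ hθ using varF_nonneg hθ
        · exact sub_le_self _ (sq_nonneg _)
    _ = ∫ p, g p.2 ^ 2 ∂π := by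
        conv_rhs => rw [hdis₁]
        exact (Measure.integral_compProd hsq).symm
    _ = ∫ x, g x ^ 2 ∂π.snd :=
        (integral_map measurable_snd.aemeasurable hg.integrable_sq.1).symm

lemma dform_PhiX_le_two_mul_dform_GammaX (hdis₁ : π = π.fst ⊗ₘ ξ)
    (hdis₂ : π = (π.snd ⊗ₘ η).map Prod.swap) (hinv : ∀ θ, Pk.sectR θ ∘ₘ ξ θ = ξ θ)
    (hg : MemLp g 2 π.snd) :
    dform π.snd (PhiX η Pk) g ≤ 2 * dform π.snd (GammaX η ξ) g := by
  obtain ⟨-, hΦ⟩ :=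
    dform_PhiX_eq_integral_dform hdis₁ hdis₂ (comp_eq_snd_of_invariant hdis₁ hinv) hg
  obtain ⟨hvar, hΓ⟩ := dform_GammaX_eq_integral_varF hdis₁ hdis₂ hg
  rw [hΦ, hΓ, ← integral_const_mul]
  refine integral_mono_of_nonneg ?_ (hvar.const_mul 2) ?_
  · filter_upwards [ae_memLp_of_memLp_snd hdis₁ hg] with θ hθ using dform_nonneg (hinv θ) hθ
  · filter_upwards [ae_memLp_of_memLp_snd hdis₁ hg] with θ hθ
      using dform_le_two_mul_varF (hinv θ) hθ

lemma varF_mul_gapR_ae_nonneg (hdis₁ : π = π.fst ⊗ₘ ξ) (hinv : ∀ θ, Pk.sectR θ ∘ₘ ξ θ = ξ θ)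
    (hg : MemLp g 2 π.snd) :
    0 ≤ᵐ[π.fst] fun θ => varF (ξ θ) g * gapR (ξ θ) (fun x => Pk (θ, x)) := by
  filter_upwards [ae_memLp_of_memLp_snd hdis₁ hg] with θ hθ
  exact mul_nonneg (varF_nonneg hθ) (gapR_nonneg (κ := Pk.sectR θ) (hinv θ))

lemma mwgRho_mul_dform_GammaX_le (hdis₁ : π = π.fst ⊗ₘ ξ)
    (hdis₂ : π = (π.snd ⊗ₘ η).map Prod.swap) (hinv : ∀ θ, Pk.sectR θ ∘ₘ ξ θ = ξ θ)
    (hg : MemLp g 2 π.snd) :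
    mwgRho π ξ Pk * dform π.snd (GammaX η ξ) g ≤ dform π.snd (PhiX η Pk) g := by
  obtain ⟨hint, hΦ⟩ :=
    dform_PhiX_eq_integral_dform hdis₁ hdis₂ (comp_eq_snd_of_invariant hdis₁ hinv) hg
  rw [(dform_GammaX_eq_integral_varF hdis₁ hdis₂ hg).2, hΦ]
  have hgθ := ae_memLp_of_memLp_snd hdis₁ hg
  have hnum : ∫ θ, varF (ξ θ) g * gapR (ξ θ) (fun x => Pk (θ, x)) ∂π.fst
      ≤ ∫ θ, dform (ξ θ) (fun x => Pk (θ, x)) g ∂π.fst := by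
    refine integral_mono_of_nonneg (varF_mul_gapR_ae_nonneg hdis₁ hinv hg) hint ?_
    filter_upwards [hgθ] with θ hθ
    rw [mul_comm]
    exact gapR_mul_varF_le_dform (κ := Pk.sectR θ) (hinv θ) hθ
  have hV : 0 ≤ ∫ θ, varF (ξ θ) g ∂π.fst :=
    integral_nonneg_of_ae (hgθ.mono fun θ hθ => varF_nonneg hθ)
  rcases hV.eq_or_lt with h0 | hpos
  · rw [← h0, mul_zero]
    refine integral_nonneg_of_ae ?_
    filter_upwards [hgθ] with θ hθ using dform_nonneg (hinv θ) hθ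
  · have hρ : mwgRho π ξ Pk ≤ (∫ θ, varF (ξ θ) g * gapR (ξ θ) (fun x => Pk (θ, x)) ∂π.fst) /
        ∫ θ, varF (ξ θ) g ∂π.fst := by
      refine csInf_le ⟨0, ?_⟩ ⟨g, hg, hpos, rfl⟩
      rintro _ ⟨f, hf, hfpos, rfl⟩
      exact div_nonneg (integral_nonneg_of_ae (varF_mul_gapR_ae_nonneg hdis₁ hinv hf)) hfpos.le
    exact ((le_div_iff₀ hpos).1 hρ).trans hnum

end MetropolisWithinGibbs

/-- In the Metropolis-within-Gibbs setting, for every `f ∈ L²(X, π_X)`: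
`0 ≤ (var(f, Γ_x) - var_{π_X}(f))/2 ≤ var(f, Φ_x)`, and if `ϱ > 0` then
`var(f, Φ_x) ≤ (ϱ⁻¹ - 1) var_{π_X}(f) + ϱ⁻¹ var(f, Γ_x)`. -/
theorem mwg_asymptotic_variance_comparison
    (π : Measure (Θ × X)) [IsProbabilityMeasure π]
    (ξ : Kernel Θ X) [IsMarkovKernel ξ] (η : Kernel X Θ) [IsMarkovKernel η]
    (hdis₁ : π = Measure.compProd π.fst ξ)
    (hdis₂ : π = (Measure.compProd π.snd η).map Prod.swap)
    (Pk : Kernel (Θ × X) X) [IsMarkovKernel Pk]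
    (hrev : ∀ θ : Θ, ∀ A B : Set X, MeasurableSet A → MeasurableSet B →
      ∫⁻ x in A, Pk (θ, x) B ∂(ξ θ) = ∫⁻ x in B, Pk (θ, x) A ∂(ξ θ)) :
    ∀ f : X → ℝ, MemLp f 2 π.snd →
      (0 : EReal) ≤ (avarE π.snd (GammaX η ξ) f - ((varF π.snd f : ℝ) : EReal)) / 2 ∧
      (avarE π.snd (GammaX η ξ) f - ((varF π.snd f : ℝ) : EReal)) / 2 ≤
        avarE π.snd (PhiX η Pk) f ∧
      (0 < mwgRho π ξ Pk →
        avarE π.snd (PhiX η Pk) f ≤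
          ((((mwgRho π ξ Pk)⁻¹ - 1) * varF π.snd f : ℝ) : EReal) +
            (((mwgRho π ξ Pk)⁻¹ : ℝ) : EReal) * avarE π.snd (GammaX η ξ) f) := by
  intro f hf
  have hinv : ∀ θ, Pk.sectR θ ∘ₘ ξ θ = ξ θ := fun θ => comp_eq_of_reversible (hrev θ)
  have hv : (varF π.snd f : EReal) ≤ avarSup π.snd (GammaX η ξ) f :=
    varF_le_avarSup hf fun g hg => dform_GammaX_le_integral_sq hdis₁ hdis₂ hg
  have hΓΦ : avarSup π.snd (GammaX η ξ) f ≤ 2 * avarSup π.snd (PhiX η Pk) f := by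
    have h := avarSup_le_of_dform_le (f := f) (K := PhiX η Pk) (L := GammaX η ξ) (c := 2⁻¹)
      (by norm_num) fun g hg => by
        linarith [dform_PhiX_le_two_mul_dform_GammaX hdis₁ hdis₂ hinv hg]
    rwa [inv_inv, show ((2 : ℝ) : EReal) = 2 by norm_cast] at h
  exact ⟨zero_le_avarE_sub_varF_div_two hv, avarE_sub_varF_div_two_le hv hΓΦ,
    fun hρ => avarE_le_of_avarSup_le hρ zero_le_avarSup
      (avarSup_le_of_dform_le hρ fun g hg => mwgRho_mul_dform_GammaX_le hdis₁ hdis₂ hinv hg)⟩
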